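/- Let α, β ∈ C[0,1] with α(t) < β(t) for all t. Let x ∈ C[0,1] satisfy x(0) ∈ (α(0), β(0)) and the regularity condition inf{ t > π(x) : x(t) ∉ [α(t), β(t)] } ∧ 1 = π(x). Then x ∈ C_1 ∪ C_2 ∪ C_3. -/

import Mathlib

open Set

/-- The first exit time `π(x) = inf{ t ∈ [0,1] : x(t) ∉ (α(t), β(t)) } ∧ 1`
(with the convention `inf ∅ = +∞`, realized by adjoining `{1}` before taking
the infimum, since the exit set is contained in `[0,1]`). -/
noncomputable def exitTime (a b x : ℝ → ℝ) : ℝ :=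
  sInf ({t ∈ Set.Icc (0:ℝ) 1 | x t ≤ a t ∨ b t ≤ x t} ∪ {1})

/-- Membership in `C_1`. -/
def MemC1 (a b x : ℝ → ℝ) : Prop :=
  ContinuousOn x (Set.Icc 0 1) ∧ exitTime a b x < 1 ∧
    x (exitTime a b x) = b (exitTime a b x) ∧
    sInf ({t | exitTime a b x < t ∧ t ≤ 1 ∧ b t < x t} ∪ {1}) = exitTime a b x

/-- Membership in `C_2`. -/
def MemC2 (a b x : ℝ → ℝ) : Prop :=
  ContinuousOn x (Set.Icc 0 1) ∧ exitTime a b x < 1 ∧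
    x (exitTime a b x) = a (exitTime a b x) ∧
    sInf ({t | exitTime a b x < t ∧ t ≤ 1 ∧ x t < a t} ∪ {1}) = exitTime a b x

/-- Membership in `C_3`. -/
def MemC3 (a b x : ℝ → ℝ) : Prop :=
  ContinuousOn x (Set.Icc 0 1) ∧ exitTime a b x = 1

open Filter Topology

/- The exit set is closed, so if `π(x) < 1` then `x` lies on a barrier at time `π(x)`, and on
exactly one of them since before `π(x)` it is strictly between the two. Just after `π(x)` it
then stays strictly away from the other barrier, so the exits from `[α, β]` that the regularity
condition provides arbitrarily close to the right of `π(x)` are all crossings of the barrier it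
touches. -/

theorem sInf_union_singleton_eq_iff_frequently_nhdsGT {p q : ℝ} (hpq : p < q) (P : ℝ → Prop) :
    sInf ({t | p < t ∧ t ≤ q ∧ P t} ∪ {q}) = p ↔ ∃ᶠ t in 𝓝[>] p, P t := by
  set T := {t | p < t ∧ t ≤ q ∧ P t} ∪ {q}
  have hne : T.Nonempty := ⟨q, Or.inr rfl⟩
  have hT : ∀ t ∈ T, p < t := by
    rintro t (ht | rfl)
    exacts [ht.1, hpq]
  rw [(nhdsGT_basis p).frequently_iff]
  constructor
  · intro hinf u hu
    obtain ⟨t, htT, htu⟩ := exists_lt_of_csInf_lt hne (hinf.trans_lt (lt_min hu hpq))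
    rcases htT with ⟨hpt, -, hPt⟩ | rfl
    · exact ⟨t, ⟨hpt, htu.trans_le (min_le_left _ _)⟩, hPt⟩
    · exact absurd htu (min_le_right _ _).not_gt
  · intro hfreq
    refine csInf_eq_of_forall_ge_of_forall_gt_exists_lt hne (fun t ht => (hT t ht).le)
      fun u hu => ?_
    obtain ⟨t, ⟨hpt, htu⟩, hPt⟩ := hfreq (min u q) (lt_min hu hpq)
    exact ⟨t, Or.inl ⟨hpt, htu.le.trans (min_le_right _ _), hPt⟩, htu.trans_le (min_le_left _ _)⟩

theorem ContinuousOn.tendsto_nhdsGT_of_mem_Ico {α β : Type*} [TopologicalSpace α] [LinearOrder α]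
    [ClosedIciTopology α] [TopologicalSpace β] {f : α → β} {c d p : α}
    (hf : ContinuousOn f (Icc c d)) (hp : p ∈ Ico c d) : Tendsto f (𝓝[>] p) (𝓝 (f p)) :=
  (hf p (Ico_subset_Icc_self hp)).mono_of_mem_nhdsWithin (Icc_mem_nhdsGT_of_mem hp)

def exitSet (a b x : ℝ → ℝ) : Set ℝ :=
  {t ∈ Icc 0 1 | x t ≤ a t ∨ b t ≤ x t}

section exitTime

variable {a b x : ℝ → ℝ}

theorem bddBelow_exitSet_union_one : BddBelow (exitSet a b x ∪ {1}) :=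
  (bddBelow_Icc.mono (sep_subset _ _)).union bddBelow_singleton

theorem exitTime_le_one : exitTime a b x ≤ 1 :=
  csInf_le bddBelow_exitSet_union_one (Or.inr rfl)

theorem exitTime_nonneg : 0 ≤ exitTime a b x := by
  refine le_csInf ⟨1, Or.inr rfl⟩ ?_
  rintro t (ht | rfl)
  exacts [ht.1.1, zero_le_one]

theorem lt_and_lt_of_lt_exitTime {t : ℝ} (ht0 : 0 ≤ t) (ht : t < exitTime a b x) :
    a t < x t ∧ x t < b t := by
  by_contra hout
  have hexit : t ∈ exitSet a b x :=
    ⟨⟨ht0, ht.le.trans exitTime_le_one⟩, (not_and_or.1 hout).imp not_lt.1 not_lt.1⟩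
  exact ht.not_ge (csInf_le bddBelow_exitSet_union_one (Or.inl hexit))

variable (ha : ContinuousOn a (Icc 0 1)) (hb : ContinuousOn b (Icc 0 1))
  (hx : ContinuousOn x (Icc 0 1))
include ha hb hx

theorem isClosed_exitSet : IsClosed (exitSet a b x) := by
  rw [exitSet, sep_or]
  exact (isClosed_Icc.isClosed_le hx ha).union (isClosed_Icc.isClosed_le hb hx)

theorem exitTime_mem_exitSet (h : exitTime a b x < 1) : exitTime a b x ∈ exitSet a b x := by
  rcases ((isClosed_exitSet ha hb hx).union isClosed_singleton).csInf_mem ⟨1, Or.inr rfl⟩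
    bddBelow_exitSet_union_one with hmem | hone
  exacts [hmem, absurd hone h.ne]

theorem apply_exitTime_eq_or_eq (hx0 : a 0 < x 0 ∧ x 0 < b 0) (h : exitTime a b x < 1) :
    x (exitTime a b x) = a (exitTime a b x) ∨ x (exitTime a b x) = b (exitTime a b x) := by
  obtain ⟨⟨hπ0, hπ1⟩, hexit⟩ := exitTime_mem_exitSet ha hb hx h
  set π := exitTime a b x
  have hπne : 0 ≠ π := by
    rintro hπ
    rw [← hπ] at hexit
    rcases hexit with h' | h'
    exacts [h'.not_gt hx0.1, h'.not_gt hx0.2]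
  have hsub : closure (Ico 0 π) ⊆ Icc 0 1 :=
    (closure_Ico hπne).subset.trans (Icc_subset_Icc_right hπ1)
  have hπmem : π ∈ closure (Ico 0 π) := (closure_Ico hπne).symm ▸ right_mem_Icc.2 hπ0
  have hlow : a π ≤ x π := le_on_closure
    (fun t ht => (lt_and_lt_of_lt_exitTime ht.1 ht.2).1.le) (ha.mono hsub) (hx.mono hsub) hπmem
  have hupp : x π ≤ b π := le_on_closure
    (fun t ht => (lt_and_lt_of_lt_exitTime ht.1 ht.2).2.le) (hx.mono hsub) (hb.mono hsub) hπmem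
  rcases hexit with h' | h'
  exacts [Or.inl (le_antisymm h' hlow), Or.inr (le_antisymm hupp h')]

end exitTime

/-- If `x ∈ C[0,1]` starts strictly inside the barriers,
`x(0) ∈ (α(0), β(0))`, and satisfies the regularity condition
`inf{ t > π(x) : x(t) ∉ [α(t), β(t)] } ∧ 1 = π(x)`, then
`x ∈ C_1 ∪ C_2 ∪ C_3`. -/
theorem mem_C1_or_C2_or_C3 (a b : ℝ → ℝ)
    (ha : ContinuousOn a (Set.Icc 0 1)) (hb : ContinuousOn b (Set.Icc 0 1))
    (hab : ∀ t ∈ Set.Icc (0:ℝ) 1, a t < b t)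
    (x : ℝ → ℝ) (hx : ContinuousOn x (Set.Icc 0 1))
    (hx0 : a 0 < x 0 ∧ x 0 < b 0)
    (hreg : sInf ({t | exitTime a b x < t ∧ t ≤ 1 ∧ (x t < a t ∨ b t < x t)} ∪ {1})
      = exitTime a b x) :
    MemC1 a b x ∨ MemC2 a b x ∨ MemC3 a b x := by
  rcases exitTime_le_one.eq_or_lt with hπ1 | hπ1
  · exact Or.inr (Or.inr ⟨hx, hπ1⟩)
  set π := exitTime a b x
  have hπ : π ∈ Ico 0 1 := ⟨exitTime_nonneg, hπ1⟩
  have hab_π := hab π (Ico_subset_Icc_self hπ)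
  have hexits := (sInf_union_singleton_eq_iff_frequently_nhdsGT hπ1 _).1 hreg
  rcases apply_exitTime_eq_or_eq ha hb hx hx0 hπ1 with hxa | hxb
  · have hbelow : ∀ᶠ t in 𝓝[>] π, x t < b t :=
      (hx.tendsto_nhdsGT_of_mem_Ico hπ).eventually_lt (hb.tendsto_nhdsGT_of_mem_Ico hπ)
        (hxa ▸ hab_π)
    refine Or.inr (Or.inl ⟨hx, hπ1, hxa, ?_⟩)
    rw [sInf_union_singleton_eq_iff_frequently_nhdsGT hπ1]
    exact (hexits.and_eventually hbelow).mono fun t h => h.1.resolve_right h.2.not_gt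
  · have habove : ∀ᶠ t in 𝓝[>] π, a t < x t :=
      (ha.tendsto_nhdsGT_of_mem_Ico hπ).eventually_lt (hx.tendsto_nhdsGT_of_mem_Ico hπ)
        (hxb ▸ hab_π)
    refine Or.inl ⟨hx, hπ1, hxb, ?_⟩
    rw [sInf_union_singleton_eq_iff_frequently_nhdsGT hπ1]
    exact (hexits.and_eventually habove).mono fun t h => h.1.resolve_left h.2.not_gt
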